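/- arXiv:2302.10488 — 3 statements merged into one kernel-verified Lean document; each statement's English description precedes it below -/
import Mathlib

section
/- Suppose X_+ = A_s X_- + B_s U_- for some (A_s,B_s). Then rank(X_+ - λ X_-) = n for all λ ∈ ℂ with |λ| ≥ 1 if and only if every (A,B) with X_+ = A X_- + B U_- is stabilizable (i.e., rank[A - λI, B] = n for all |λ| ≥ 1). -/
/-!
The systems consistent with the data form the affine family `(As, Bs) + Δ` with
`Δ * [X₋; U₋] = 0`, and `[A - λI, B] * [X₋; U₋] = X₊ - λX₋` for each of them. Hence a left
kernel vector of a Hautus matrix `[A - λI, B]` also annihilates `X₊ - λX₋`.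

Conversely, let `ξ ≠ 0` annihilate `X₊ - λX₋`. Then `α = ξ * [As - λI, Bs]` annihilates
`[X₋; U₋]`. If the real span of the entries of `ξ` is all of `ℂ`, a real right inverse of
`c ↦ ξ ⬝ c` produces a real `Δ` with `Δ * [X₋; U₋] = 0` and `ξ * Δ = α`, so `ξ` is a left kernel
vector of the Hautus matrix of `(As, Bs) - Δ`. Otherwise `ξ` is a complex multiple of a real
vector `r`. Then either `λ` is real, or `r` annihilates both `X₋` and `X₊` and `λ` may be
replaced by `1`. In both cases the same argument runs over `ℝ`.
-/

open Matrix

namespace Matrix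

variable {K : Type*} [Field K] {ι κ τ : Type*} [Fintype ι] [Fintype κ]

theorem rank_eq_card_iff_forall_vecMul_eq_zero (M : Matrix ι κ K) :
    M.rank = Fintype.card ι ↔ ∀ v, v ᵥ* M = 0 → v = 0 := by
  rw [rank_eq_finrank_span_row, ← Set.finrank, eq_comm,
    ← linearIndependent_iff_card_eq_finrank_span, ← vecMul_injective_iff, ← coe_vecMulLinear, injective_iff_map_eq_zero]
  rfl

theorem exists_mul_eq_zero_vecMul_map_eq {L : Type*} [CommRing L] [Algebra K L] {ξ : ι → L}
    (hξ : Function.Surjective (Fintype.linearCombination K ξ)) {W : Matrix κ τ K} {α : κ → L}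
    (hα : α ᵥ* W.map (algebraMap K L) = 0) :
    ∃ Δ : Matrix ι κ K, Δ * W = 0 ∧ ξ ᵥ* Δ.map (algebraMap K L) = α := by
  obtain ⟨g, hg⟩ := (Fintype.linearCombination K ξ).exists_rightInverse_of_surjective
    (LinearMap.range_eq_top.2 hξ)
  refine ⟨of fun i j => g (α j) i, ?_, ?_⟩
  · ext i t
    have hαt : ∑ j, W j t • α j = 0 := by
      simpa [vecMul, dotProduct, Algebra.smul_def, mul_comm] using congr_fun hα t
    simpa [mul_apply, mul_comm, map_sum, map_smul] using congr_arg (g · i) hαt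
  · ext j
    simpa [vecMul, dotProduct, Fintype.linearCombination_apply, Algebra.smul_def, mul_comm]
      using LinearMap.congr_fun hg (α j)

theorem ofReal_vecMul_map (r : ι → ℝ) (M : Matrix ι τ ℝ) :
    (fun i => (r i : ℂ)) ᵥ* M.map Complex.ofReal = fun t => ((r ᵥ* M) t : ℂ) :=
  funext fun t => (Complex.ofRealHom.map_vecMul M r t).symm

theorem exists_real_vecMul_sub_smul_eq_zero {Xm Xp : Matrix ι τ ℝ} {r : ι → ℝ} {z : ℂ}
    (hz : 1 ≤ ‖z‖)
    (hr : (fun i => (r i : ℂ)) ᵥ* (Xp.map Complex.ofReal - z • Xm.map Complex.ofReal) = 0) :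
    ∃ l : ℝ, 1 ≤ |l| ∧ r ᵥ* (Xp - l • Xm) = 0 := by
  have key (t : τ) : ((r ᵥ* Xp) t : ℂ) = z * (r ᵥ* Xm) t := by
    rw [vecMul_sub, vecMul_smul, sub_eq_zero] at hr
    simpa [ofReal_vecMul_map] using congr_fun hr t
  by_cases h0 : r ᵥ* Xm = 0
  · refine ⟨1, by simp, ?_⟩
    ext t
    simpa [vecMul_sub, h0] using key t
  · obtain ⟨t, ht⟩ := Function.ne_iff.1 h0
    obtain ⟨l, rfl⟩ : ∃ l : ℝ, (l : ℂ) = z :=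
      ⟨(r ᵥ* Xp) t / (r ᵥ* Xm) t, by
        push_cast; rw [key t, mul_div_cancel_right₀ z (by exact_mod_cast ht)]⟩
    refine ⟨l, by simpa using hz, ?_⟩
    ext s
    rw [vecMul_sub, vecMul_smul, Pi.sub_apply, Pi.smul_apply, smul_eq_mul, Pi.zero_apply,
      sub_eq_zero]
    exact_mod_cast key s

end Matrix

theorem Fintype.surjective_linearCombination_of_ne_zero {K ι : Type*} [Field K] [Fintype ι]
    {r : ι → K} (hr : r ≠ 0) : Function.Surjective (Fintype.linearCombination K r) := by
  classical
  obtain ⟨i, hi⟩ := Function.ne_iff.1 hr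
  exact fun y => ⟨Pi.single i (y / r i), by simpa using div_mul_cancel₀ y hi⟩

theorem Complex.surjective_linearCombination_or_eq_smul_ofReal {ι : Type*} [Fintype ι]
    (ξ : ι → ℂ) :
    Function.Surjective (Fintype.linearCombination ℝ ξ) ∨
      ∃ (w : ℂ) (r : ι → ℝ), ξ = w • fun i => (r i : ℂ) := by
  by_cases hξ : ξ = 0
  · exact Or.inr ⟨0, 0, by simp [hξ]⟩
  obtain ⟨i, hi⟩ := Function.ne_iff.1 hξ
  by_cases h : ∀ j, ∃ a : ℝ, a • ξ i = ξ j
  · choose r hr using h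
    exact Or.inr ⟨ξ i, r, funext fun j => by simp [← hr j, Complex.real_smul, mul_comm]⟩
  · push Not at h
    obtain ⟨j, hj⟩ := h
    have hli : LinearIndependent ℝ ![ξ j, ξ i] := linearIndependent_fin2.2 ⟨hi, hj⟩
    refine Or.inl ((span_range_eq_top_iff_surjective_fintypeLinearCombination ℝ ξ).1 ?_)
    rw [eq_top_iff, ← hli.span_eq_top_of_card_eq_finrank' (by simp)]
    refine Submodule.span_mono (Set.range_subset_iff.2 fun k => ?_)
    fin_cases k <;> simp

section ConsistentSystems

variable {K L : Type*} [Field K] [CommRing L] [Algebra K L]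
  {ι μ τ : Type*} [Fintype ι] [DecidableEq ι] [Fintype μ]
  {Xm Xp : Matrix ι τ K} {Um : Matrix μ τ K}

theorem fromCols_sub_smul_one_mul_fromRows {A : Matrix ι ι K} {B : Matrix ι μ K}
    (hAB : Xp = A * Xm + B * Um) (z : L) :
    fromCols (A.map (algebraMap K L) - z • 1) (B.map (algebraMap K L)) *
        fromRows (Xm.map (algebraMap K L)) (Um.map (algebraMap K L)) =
      Xp.map (algebraMap K L) - z • Xm.map (algebraMap K L) := by
  rw [fromCols_mul_fromRows, Matrix.sub_mul, Matrix.smul_mul, Matrix.one_mul, hAB,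
    Matrix.map_add, Matrix.map_mul, Matrix.map_mul, sub_add_eq_add_sub]
  exact map_add _

theorem exists_consistent_vecMul_fromCols_eq_zero {As : Matrix ι ι K} {Bs : Matrix ι μ K}
    (hdata : Xp = As * Xm + Bs * Um) {ξ : ι → L}
    (hξ : Function.Surjective (Fintype.linearCombination K ξ)) {z : L}
    (hξz : ξ ᵥ* (Xp.map (algebraMap K L) - z • Xm.map (algebraMap K L)) = 0) :
    ∃ (A : Matrix ι ι K) (B : Matrix ι μ K), Xp = A * Xm + B * Um ∧
      ξ ᵥ* fromCols (A.map (algebraMap K L) - z • 1) (B.map (algebraMap K L)) = 0 := by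
  set α := ξ ᵥ* fromCols (As.map (algebraMap K L) - z • 1) (Bs.map (algebraMap K L))
  have hα : α ᵥ* (fromRows Xm Um).map (algebraMap K L) = 0 := by
    rw [fromRows_map, vecMul_vecMul, fromCols_sub_smul_one_mul_fromRows hdata, hξz]
  obtain ⟨Δ, hΔW, hξΔ⟩ := exists_mul_eq_zero_vecMul_map_eq hξ hα
  refine ⟨As - Δ.toCols₁, Bs - Δ.toCols₂, ?_, ?_⟩
  · rw [Matrix.sub_mul, Matrix.sub_mul, sub_add_sub_comm, ← hdata, ← fromCols_mul_fromRows,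
      fromCols_toCols, hΔW, sub_zero]
  · have hperturb : fromCols ((As - Δ.toCols₁).map (algebraMap K L) - z • 1)
        ((Bs - Δ.toCols₂).map (algebraMap K L)) =
        fromCols (As.map (algebraMap K L) - z • 1) (Bs.map (algebraMap K L)) -
          Δ.map (algebraMap K L) := by
      ext i (j | j) <;> simp [sub_right_comm]
    rw [hperturb, vecMul_sub, hξΔ, sub_self]

end ConsistentSystems

theorem exists_consistent_unstable_of_vecMul_eq_zero {ι μ τ : Type*} [Fintype ι] [DecidableEq ι]
    [Fintype μ] {Xm Xp : Matrix ι τ ℝ} {Um : Matrix μ τ ℝ} {As : Matrix ι ι ℝ}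
    {Bs : Matrix ι μ ℝ} (hdata : Xp = As * Xm + Bs * Um) {ξ : ι → ℂ} (hξ0 : ξ ≠ 0) {z : ℂ}
    (hz : 1 ≤ ‖z‖) (hξ : ξ ᵥ* (Xp.map Complex.ofReal - z • Xm.map Complex.ofReal) = 0) :
    ∃ (A : Matrix ι ι ℝ) (B : Matrix ι μ ℝ), Xp = A * Xm + B * Um ∧
      ∃ z' : ℂ, 1 ≤ ‖z'‖ ∧ ∃ ζ : ι → ℂ, ζ ≠ 0 ∧
        ζ ᵥ* fromCols (A.map Complex.ofReal - z' • 1) (B.map Complex.ofReal) = 0 := by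
  rcases Complex.surjective_linearCombination_or_eq_smul_ofReal ξ with hsurj | ⟨w, r, rfl⟩
  · simp only [← Complex.coe_algebraMap] at hξ ⊢
    obtain ⟨A, B, hAB, hξAB⟩ := exists_consistent_vecMul_fromCols_eq_zero hdata hsurj hξ
    exact ⟨A, B, hAB, z, hz, ξ, hξ0, hξAB⟩
  have hw : w ≠ 0 := by rintro rfl; simp at hξ0
  have hr : r ≠ 0 := by rintro rfl; simp [funext_iff] at hξ0
  rw [smul_vecMul, smul_eq_zero, or_iff_right hw] at hξ
  obtain ⟨l, hl, hrl⟩ := exists_real_vecMul_sub_smul_eq_zero hz hξ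
  obtain ⟨A, B, hAB, hrAB⟩ := exists_consistent_vecMul_fromCols_eq_zero (L := ℝ) hdata
    (Fintype.surjective_linearCombination_of_ne_zero hr) (z := l) (by simpa using hrl)
  simp only [Algebra.algebraMap_self, RingHom.coe_id, Matrix.map_id] at hrAB
  refine ⟨A, B, hAB, l, by simpa using hl, fun i => (r i : ℂ),
    fun h => hr (funext fun i => by simpa using congr_fun h i), ?_⟩
  have hmap : fromCols (A.map Complex.ofReal - (l : ℂ) • 1) (B.map Complex.ofReal) =
      (fromCols (A - l • 1) B).map Complex.ofReal := by
    ext i (j | j)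
    · by_cases hij : i = j <;> simp [hij]
    · simp
  rw [hmap, ofReal_vecMul_map, hrAB]
  rfl

/-- Data-driven Hautus test for stabilizability: assuming the data are generated by
some system, rank(X₊ - λX₋) = n for all λ ∈ ℂ with |λ| ≥ 1 iff every system (A,B) consistent
with the data is stabilizable (Hautus test). -/
theorem informativity_for_stabilizability
    (n m T : ℕ)
    (Xm Xp : Matrix (Fin n) (Fin T) ℝ) (Um : Matrix (Fin m) (Fin T) ℝ)
    (As : Matrix (Fin n) (Fin n) ℝ) (Bs : Matrix (Fin n) (Fin m) ℝ)
    (hdata : Xp = As * Xm + Bs * Um) :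
    (∀ z : ℂ, 1 ≤ ‖z‖ → (Xp.map Complex.ofReal - z • Xm.map Complex.ofReal).rank = n)
    ↔ (∀ (A : Matrix (Fin n) (Fin n) ℝ) (B : Matrix (Fin n) (Fin m) ℝ),
        Xp = A * Xm + B * Um →
        ∀ z : ℂ, 1 ≤ ‖z‖ →
          (Matrix.fromCols
            (A.map Complex.ofReal - z • (1 : Matrix (Fin n) (Fin n) ℂ))
            (B.map Complex.ofReal)).rank = n) := by
  have hrank {κ : Type} [Fintype κ] (M : Matrix (Fin n) κ ℂ) :
      M.rank = n ↔ ∀ v, v ᵥ* M = 0 → v = 0 := by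
    simpa using M.rank_eq_card_iff_forall_vecMul_eq_zero
  simp only [hrank]
  constructor
  · intro h A B hAB z hz v hv
    refine h z hz v ?_
    simp only [← Complex.coe_algebraMap] at hv ⊢
    rw [← fromCols_sub_smul_one_mul_fromRows hAB, ← vecMul_vecMul, hv, zero_vecMul]
  · intro h z hz ξ hξ
    by_contra hξ0
    obtain ⟨A, B, hAB, z', hz', ζ, hζ0, hζ⟩ :=
      exists_consistent_unstable_of_vecMul_eq_zero hdata hξ0 hz hξ
    exact hζ0 (h A B hAB z' hz' ζ hζ)
end

section
/- Assume Σ_D = {(A,B) : X_+ = A X_- + B U_-} is nonempty. There exists K ∈ ℝ^{m×n} such that A + B K is Schur stable for all (A,B) ∈ Σ_D if and only if X_- has full row rank n and there exists a right inverse X_-^♯ of X_- such that X_+ X_-^♯ is Schur stable. Moreover in this case K = U_- X_-^♯ for such a right inverse, and A + B K = X_+ X_-^♯ for all (A,B) ∈ Σ_D. -/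
/-!
If `K` stabilizes every system consistent with the data, the closed-loop trace is bounded by `n`,
since all eigenvalues lie in the unit disc. For `(a, b)` in the left kernel of `[X₋; U₋]`, adding
the rank-one terms `v aᵀ`, `v bᵀ` to a consistent `(A₀, B₀)` keeps it consistent and changes the
closed loop by `v (a + Kᵀ b)ᵀ`; with `v = t (a + Kᵀ b)` the trace grows like `t ‖a + Kᵀ b‖²`, so
`a + Kᵀ b = 0`. Hence the left kernel of `[X₋; U₋]` lies in that of `[I; K]`, i.e.
`[I; K] = [X₋; U₋] X♯` for some `X♯`, and then `A + B K = X₊ X♯` for every consistent `(A, B)`.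
-/

/-- A real square matrix is Schur stable if all its complex eigenvalues have modulus
strictly less than one. -/
def SchurStable {n : ℕ} (M : Matrix (Fin n) (Fin n) ℝ) : Prop :=
  ∀ z ∈ spectrum ℂ (M.map Complex.ofReal), ‖z‖ < 1

open Matrix Polynomial

theorem Matrix.norm_trace_le_of_forall_mem_spectrum {ι : Type*} [Fintype ι] [DecidableEq ι]
    (M : Matrix ι ι ℂ) {r : ℝ} (h : ∀ z ∈ spectrum ℂ M, ‖z‖ ≤ r) :
    ‖M.trace‖ ≤ Fintype.card ι * r := by
  have hcard : M.charpoly.roots.card = Fintype.card ι := by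
    rw [IsAlgClosed.card_roots_eq_natDegree, charpoly_natDegree_eq_dim]
  calc ‖M.trace‖ = ‖M.charpoly.roots.sum‖ := by rw [trace_eq_sum_roots_charpoly]
    _ ≤ (M.charpoly.roots.map (‖·‖)).sum := norm_multiset_sum_le _
    _ ≤ M.charpoly.roots.card • r := by
        rw [← Multiset.card_map (‖·‖)]
        refine Multiset.sum_le_card_nsmul _ _ fun x hx => ?_
        obtain ⟨z, hz, rfl⟩ := Multiset.mem_map.mp hx
        exact h z (mem_spectrum_of_isRoot_charpoly (isRoot_of_mem_roots hz))
    _ = Fintype.card ι * r := by rw [hcard, nsmul_eq_mul]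

theorem SchurStable.abs_trace_le {n : ℕ} {M : Matrix (Fin n) (Fin n) ℝ} (h : SchurStable M) :
    |M.trace| ≤ n := by
  have htrace : (M.map Complex.ofReal).trace = M.trace :=
    (AddMonoidHom.map_trace Complex.ofRealHom M).symm
  have := (M.map Complex.ofReal).norm_trace_le_of_forall_mem_spectrum fun z hz => (h z hz).le
  rwa [htrace, Complex.norm_real, Real.norm_eq_abs, Fintype.card_fin, mul_one] at this

theorem eq_zero_of_forall_abs_add_mul_le {a s C : ℝ} (h : ∀ t, |a + t * s| ≤ C) : s = 0 := by
  by_contra hs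
  have := h ((C + 1 - a) / s)
  rw [div_mul_cancel₀ _ hs] at this
  linarith [le_abs_self (a + (C + 1 - a))]

theorem eq_zero_of_forall_schurStable_add_smul_vecMulVec {n : ℕ} (N : Matrix (Fin n) (Fin n) ℝ)
    (v : Fin n → ℝ) (h : ∀ t : ℝ, SchurStable (N + t • vecMulVec v v)) : v = 0 := by
  have hbdd : ∀ t : ℝ, |N.trace + t * (v ⬝ᵥ v)| ≤ n := fun t => by
    simpa [trace_add, trace_smul, trace_vecMulVec] using (h t).abs_trace_le
  exact dotProduct_self_eq_zero.mp (eq_zero_of_forall_abs_add_mul_le hbdd)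

theorem Matrix.mem_range_mulVecLin_of_forall_vecMul_eq_zero {K ι τ : Type*} [Field K]
    [Fintype ι] [Fintype τ] (D : Matrix ι τ K) (c : ι → K)
    (h : ∀ w, w ᵥ* D = 0 → w ⬝ᵥ c = 0) : c ∈ LinearMap.range D.mulVecLin := by
  classical
  by_contra hc
  obtain ⟨φ, hφc, hφD⟩ := Submodule.exists_dual_map_eq_bot_of_notMem hc inferInstance
  obtain ⟨w, rfl⟩ := (dotProductEquiv K ι).surjective φ
  refine hφc (h w ?_)
  ext t
  have : w ⬝ᵥ D *ᵥ Pi.single t 1 = 0 := by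
    rw [← Submodule.mem_bot K, ← hφD]
    exact Submodule.mem_map_of_mem (LinearMap.mem_range_self _ _)
  simpa [dotProduct_mulVec, vecMul, dotProduct, col] using this

theorem Matrix.exists_mul_eq_of_forall_vecMul_eq_zero {K ι τ κ : Type*} [Field K]
    [Fintype ι] [Fintype τ] (D : Matrix ι τ K) (G : Matrix ι κ K)
    (h : ∀ w, w ᵥ* D = 0 → w ᵥ* G = 0) : ∃ X : Matrix τ κ K, D * X = G := by
  have hcol : ∀ j, ∃ x, D *ᵥ x = Gᵀ j := fun j =>
    D.mem_range_mulVecLin_of_forall_vecMul_eq_zero _ fun w hw => by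
      simpa [vecMul, dotProduct] using congrFun (h w hw) j
  choose x hx using hcol
  refine ⟨(of x)ᵀ, ?_⟩
  ext i j
  simpa [mul_apply, mulVec, dotProduct] using congrFun (hx j) i

theorem Matrix.rank_eq_card_of_mul_eq_one {K m τ : Type*} [Field K] [Fintype m] [DecidableEq m]
    [Fintype τ] {A : Matrix m τ K} {B : Matrix τ m K} (h : A * B = 1) :
    A.rank = Fintype.card m :=
  le_antisymm A.rank_le_card_height (rank_one (R := K) (n := m) ▸ h ▸ rank_mul_le_left A B)

section Data

variable {R ι μ τ : Type*} [CommRing R] [Fintype ι] [Fintype μ]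
  {Xm Xp : Matrix ι τ R} {Um : Matrix μ τ R} {A : Matrix ι ι R} {B : Matrix ι μ R}

theorem eq_add_vecMulVec_mul_add_of_vecMul_add_vecMul_eq_zero (h : Xp = A * Xm + B * Um)
    {a : ι → R} {b : μ → R} (hab : a ᵥ* Xm + b ᵥ* Um = 0) (u : ι → R) :
    Xp = (A + vecMulVec u a) * Xm + (B + vecMulVec u b) * Um := by
  rw [h, Matrix.add_mul, Matrix.add_mul, vecMulVec_mul, vecMulVec_mul, add_add_add_comm,
    ← vecMulVec_add, hab]
  ext i j
  simp [vecMulVec_apply]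

theorem add_mul_mul_eq_mul_of_mul_eq_one [Fintype τ] [DecidableEq ι] {Xs : Matrix τ ι R}
    (h : Xp = A * Xm + B * Um) (hXs : Xm * Xs = 1) : A + B * (Um * Xs) = Xp * Xs := by
  rw [h, Matrix.add_mul, Matrix.mul_assoc, hXs, Matrix.mul_one, Matrix.mul_assoc]

end Data

section Stabilization

variable {n : ℕ} {μ τ : Type*} [Fintype μ]
  {Xm Xp : Matrix (Fin n) τ ℝ} {Um : Matrix μ τ ℝ} {K : Matrix μ (Fin n) ℝ}

theorem add_vecMul_eq_zero_of_forall_schurStable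
    (hK : ∀ (A : Matrix (Fin n) (Fin n) ℝ) (B : Matrix (Fin n) μ ℝ),
      Xp = A * Xm + B * Um → SchurStable (A + B * K))
    {A₀ : Matrix (Fin n) (Fin n) ℝ} {B₀ : Matrix (Fin n) μ ℝ} (h₀ : Xp = A₀ * Xm + B₀ * Um)
    {a : Fin n → ℝ} {b : μ → ℝ} (hab : a ᵥ* Xm + b ᵥ* Um = 0) : a + b ᵥ* K = 0 := by
  refine eq_zero_of_forall_schurStable_add_smul_vecMulVec (A₀ + B₀ * K) _ fun t => ?_
  set v := a + b ᵥ* K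
  have hcl : A₀ + vecMulVec (t • v) a + (B₀ + vecMulVec (t • v) b) * K
      = A₀ + B₀ * K + t • vecMulVec v v := by
    rw [Matrix.add_mul, vecMulVec_mul, add_add_add_comm, ← vecMulVec_add, smul_vecMulVec]
  rw [← hcl]
  exact hK _ _ (eq_add_vecMulVec_mul_add_of_vecMul_add_vecMul_eq_zero h₀ hab (t • v))

theorem exists_rightInverse_of_forall_schurStable [Fintype τ]
    (hK : ∀ (A : Matrix (Fin n) (Fin n) ℝ) (B : Matrix (Fin n) μ ℝ),
      Xp = A * Xm + B * Um → SchurStable (A + B * K))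
    {A₀ : Matrix (Fin n) (Fin n) ℝ} {B₀ : Matrix (Fin n) μ ℝ} (h₀ : Xp = A₀ * Xm + B₀ * Um) :
    ∃ Xs : Matrix τ (Fin n) ℝ, Xm * Xs = 1 ∧ Um * Xs = K := by
  obtain ⟨Xs, hXs⟩ := (fromRows Xm Um).exists_mul_eq_of_forall_vecMul_eq_zero (fromRows 1 K)
    fun w hw => by
      rw [vecMul_fromRows] at hw ⊢
      rw [vecMul_one, add_vecMul_eq_zero_of_forall_schurStable hK h₀ hw]
  rw [fromRows_mul] at hXs
  exact ⟨Xs, fromRows_inj hXs⟩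

theorem forall_schurStable_iff_exists_rightInverse [Fintype τ]
    {A₀ : Matrix (Fin n) (Fin n) ℝ} {B₀ : Matrix (Fin n) μ ℝ} (h₀ : Xp = A₀ * Xm + B₀ * Um) :
    (∀ (A : Matrix (Fin n) (Fin n) ℝ) (B : Matrix (Fin n) μ ℝ),
        Xp = A * Xm + B * Um → SchurStable (A + B * K))
      ↔ ∃ Xs : Matrix τ (Fin n) ℝ, Xm * Xs = 1 ∧ SchurStable (Xp * Xs) ∧ K = Um * Xs ∧
          ∀ (A : Matrix (Fin n) (Fin n) ℝ) (B : Matrix (Fin n) μ ℝ),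
            Xp = A * Xm + B * Um → A + B * K = Xp * Xs := by
  refine ⟨fun hK => ?_, fun ⟨Xs, _, hstab, _, hcl⟩ A B hAB => hcl A B hAB ▸ hstab⟩
  obtain ⟨Xs, hXs, rfl⟩ := exists_rightInverse_of_forall_schurStable hK h₀
  have hcl := fun A B (hAB : Xp = A * Xm + B * Um) => add_mul_mul_eq_mul_of_mul_eq_one hAB hXs
  exact ⟨Xs, hXs, hcl A₀ B₀ h₀ ▸ hK A₀ B₀ h₀, rfl, hcl⟩

end Stabilization

/-- Conditions for data-driven stabilization by state feedback: the data are
informative for stabilization iff X₋ has full row rank and some right inverse X₋♯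
makes X₊X₋♯ Schur stable; moreover the stabilizing gains are exactly K = U₋X₋♯ for
such right inverses, and then A + BK = X₊X₋♯ for all consistent (A,B). -/
theorem informativity_for_stabilization
    (n m T : ℕ)
    (Xm Xp : Matrix (Fin n) (Fin T) ℝ) (Um : Matrix (Fin m) (Fin T) ℝ)
    (hne : ∃ (A : Matrix (Fin n) (Fin n) ℝ) (B : Matrix (Fin n) (Fin m) ℝ),
      Xp = A * Xm + B * Um) :
    ((∃ K : Matrix (Fin m) (Fin n) ℝ,
        ∀ (A : Matrix (Fin n) (Fin n) ℝ) (B : Matrix (Fin n) (Fin m) ℝ),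
          Xp = A * Xm + B * Um → SchurStable (A + B * K))
      ↔ (Xm.rank = n ∧ ∃ Xs : Matrix (Fin T) (Fin n) ℝ,
          Xm * Xs = 1 ∧ SchurStable (Xp * Xs)))
    ∧ (∀ K : Matrix (Fin m) (Fin n) ℝ,
        (∀ (A : Matrix (Fin n) (Fin n) ℝ) (B : Matrix (Fin n) (Fin m) ℝ),
          Xp = A * Xm + B * Um → SchurStable (A + B * K))
        ↔ ∃ Xs : Matrix (Fin T) (Fin n) ℝ,
            Xm * Xs = 1 ∧ SchurStable (Xp * Xs) ∧ K = Um * Xs ∧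
            (∀ (A : Matrix (Fin n) (Fin n) ℝ) (B : Matrix (Fin n) (Fin m) ℝ),
              Xp = A * Xm + B * Um → A + B * K = Xp * Xs)) := by
  obtain ⟨A₀, B₀, h₀⟩ := hne
  have hgain := fun K => forall_schurStable_iff_exists_rightInverse (K := K) h₀
  refine ⟨⟨fun ⟨K, hK⟩ => ?_, fun ⟨_, Xs, hXs, hstab⟩ => ⟨Um * Xs, (hgain _).2 ?_⟩⟩, hgain⟩
  · obtain ⟨Xs, hXs, hstab, -⟩ := (hgain K).1 hK
    exact ⟨by simpa using rank_eq_card_of_mul_eq_one hXs, Xs, hXs, hstab⟩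
  · exact ⟨Xs, hXs, hstab, rfl, fun A B hAB => add_mul_mul_eq_mul_of_mul_eq_one hAB hXs⟩
end

section
/- Let P(ξ) = Iξ^L + P_{L-1}ξ^{L-1} + ... + P_0 with P_i ∈ ℝ^{p×p}, and let P denote the coefficient matrix [P_0 P_1 ... P_{L-1}] ∈ ℝ^{p×pL}. If there exists Ψ ∈ S^{pL} with Ψ ≥ 0 such that [I; -P]ᵀ ( diag(0_p, Ψ) - diag(Ψ, 0_p) ) [I; -P] < 0, then the companion matrix of P(ξ) is Schur stable (all roots λ of det P(λ) = 0 satisfy |λ| < 1). -/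
open scoped Matrix

/-- The block companion matrix of the monic matrix polynomial
P(ξ) = Iξ^L + P_{L-1}ξ^{L-1} + ⋯ + P₀: identity blocks on the superdiagonal and
last block row [-P₀, …, -P_{L-1}]. -/
def blockCompanion (p L : ℕ) (P : Fin L → Matrix (Fin p) (Fin p) ℝ) :
    Matrix (Fin L × Fin p) (Fin L × Fin p) ℝ :=
  Matrix.of fun i j =>
    if (i.1 : ℕ) + 1 = L then -(P j.1 i.2 j.2)
    else if (j.1 : ℕ) = (i.1 : ℕ) + 1 ∧ i.2 = j.2 then 1 else 0

/-- The coefficient matrix P = [P₀ P₁ ⋯ P_{L-1}] ∈ ℝ^{p×pL}. -/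
def coeffMatrix (p L : ℕ) (P : Fin L → Matrix (Fin p) (Fin p) ℝ) :
    Matrix (Fin p) (Fin L × Fin p) ℝ :=
  Matrix.of fun a j => P j.1 a j.2

/-- The stacked matrix [I_{pL}; -P] ∈ ℝ^{(pL+p)×pL}, with the p(L+1) rows indexed
lexicographically by Fin (L+1) × Fin p (rows with block index < L carry I_{pL}). -/
def stackedIP (p L : ℕ) (P : Fin L → Matrix (Fin p) (Fin p) ℝ) :
    Matrix (Fin (L + 1) × Fin p) (Fin L × Fin p) ℝ :=
  Matrix.of fun i j =>
    if (i.1 : ℕ) < L then (if (i.1 : ℕ) = (j.1 : ℕ) ∧ i.2 = j.2 then 1 else 0)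
    else -(P j.1 i.2 j.2)

/-- Embedding placing a pL×pL matrix Ψ as the upper-left block of a
p(L+1)×p(L+1) matrix: diag(Ψ, 0_p) = E₁ Ψ E₁ᵀ. -/
def embedUpper (p L : ℕ) : Matrix (Fin (L + 1) × Fin p) (Fin L × Fin p) ℝ :=
  Matrix.of fun i j => if (i.1 : ℕ) = (j.1 : ℕ) ∧ i.2 = j.2 then 1 else 0

/-- Embedding placing a pL×pL matrix Ψ as the lower-right block of a
p(L+1)×p(L+1) matrix: diag(0_p, Ψ) = E₂ Ψ E₂ᵀ. -/
def embedLower (p L : ℕ) : Matrix (Fin (L + 1) × Fin p) (Fin L × Fin p) ℝ :=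
  Matrix.of fun i j => if (i.1 : ℕ) = (j.1 : ℕ) + 1 ∧ i.2 = j.2 then 1 else 0

/-! The quadratic matrix inequality is a discrete Lyapunov (Stein) inequality in disguise:
the two block selections `embedUpperᵀ` and `embedLowerᵀ` send `[I; -P]` to `I` and to the
companion matrix `A`, so the QMI matrix equals `AᵀΨA - Ψ`. If `Av = λv` with `v ≠ 0`, then
`v*(Ψ - AᵀΨA)v = (1 - |λ|²) v*Ψv`; the left side is positive and `v*Ψv ≥ 0`,
so `|λ| < 1`. -/

open Matrix

namespace Matrix

variable {n : Type*} [Fintype n]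

lemma re_star_dotProduct_map_ofReal_mulVec (Q : Matrix n n ℝ) (v : n → ℂ) :
    (star v ⬝ᵥ Q.map Complex.ofReal *ᵥ v).re =
      (fun i ↦ (v i).re) ⬝ᵥ Q *ᵥ (fun i ↦ (v i).re) +
        (fun i ↦ (v i).im) ⬝ᵥ Q *ᵥ (fun i ↦ (v i).im) := by
  simp only [dotProduct, mulVec, map_apply, Pi.star_apply, Finset.mul_sum, Complex.re_sum,
    ← Finset.sum_add_distrib]
  refine Finset.sum_congr rfl fun i _ ↦ Finset.sum_congr rfl fun j _ ↦ ?_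
  simp [Complex.mul_re, Complex.mul_im]

lemma PosSemidef.re_star_dotProduct_map_ofReal_mulVec_nonneg {Q : Matrix n n ℝ}
    (hQ : Q.PosSemidef) (v : n → ℂ) :
    0 ≤ (star v ⬝ᵥ Q.map Complex.ofReal *ᵥ v).re := by
  rw [re_star_dotProduct_map_ofReal_mulVec]
  exact add_nonneg (hQ.dotProduct_mulVec_nonneg _) (hQ.dotProduct_mulVec_nonneg _)

lemma PosDef.re_star_dotProduct_map_ofReal_mulVec_pos {Q : Matrix n n ℝ}
    (hQ : Q.PosDef) {v : n → ℂ} (hv : v ≠ 0) :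
    0 < (star v ⬝ᵥ Q.map Complex.ofReal *ᵥ v).re := by
  rw [re_star_dotProduct_map_ofReal_mulVec]
  have hre := hQ.posSemidef.dotProduct_mulVec_nonneg (fun i ↦ (v i).re)
  have him := hQ.posSemidef.dotProduct_mulVec_nonneg (fun i ↦ (v i).im)
  by_cases hx : (fun i ↦ (v i).re) = 0
  · have hy : (fun i ↦ (v i).im) ≠ 0 := fun hy ↦
      hv (funext fun i ↦ Complex.ext (congrFun hx i) (congrFun hy i))
    exact add_pos_of_nonneg_of_pos hre (hQ.dotProduct_mulVec_pos hy)
  · exact add_pos_of_pos_of_nonneg (hQ.dotProduct_mulVec_pos hx) him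

lemma map_ofReal_transpose_mul_mul (A Ψ : Matrix n n ℝ) :
    (Aᵀ * Ψ * A).map Complex.ofReal =
      (A.map Complex.ofReal)ᴴ * Ψ.map Complex.ofReal * A.map Complex.ofReal := by
  rw [← conjTranspose_map _ (fun x ↦ (Complex.conj_ofReal x).symm),
    conjTranspose_eq_transpose_of_trivial]
  exact (Matrix.map_mul (f := Complex.ofRealHom)).trans (congrArg (· * _) Matrix.map_mul)

lemma star_dotProduct_conjTranspose_mul_mul_mulVec {R : Type*} [CommRing R] [StarRing R]
    {B : Matrix n n R} {μ : R} {v : n → R} (hv : B *ᵥ v = μ • v)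
    (M : Matrix n n R) :
    star v ⬝ᵥ (Bᴴ * M * B) *ᵥ v = (star μ * μ) * (star v ⬝ᵥ M *ᵥ v) := by
  rw [← mulVec_mulVec, hv, ← mulVec_mulVec, dotProduct_mulVec,
    ← star_mulVec, hv, star_smul, mulVec_smul, smul_dotProduct, dotProduct_smul,
    smul_smul, smul_eq_mul]

lemma exists_mulVec_eq_smul_of_mem_spectrum {K : Type*} [Field K] [DecidableEq n]
    {B : Matrix n n K} {μ : K} (h : μ ∈ spectrum K B) : ∃ v ≠ 0, B *ᵥ v = μ • v := by
  rw [← spectrum_toLin', ← Module.End.hasEigenvalue_iff_mem_spectrum] at h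
  obtain ⟨v, hv⟩ := h.exists_hasEigenvector
  exact ⟨v, hv.2, by simpa using hv.apply_eq_smul⟩

theorem norm_lt_one_of_mem_spectrum_of_posDef_sub [DecidableEq n]
    {A Ψ : Matrix n n ℝ} (hΨ : Ψ.PosSemidef) (hStein : (Ψ - Aᵀ * Ψ * A).PosDef) {z : ℂ}
    (hz : z ∈ spectrum ℂ (A.map Complex.ofReal)) : ‖z‖ < 1 := by
  obtain ⟨v, hv, hAv⟩ := exists_mulVec_eq_smul_of_mem_spectrum hz
  have hStein_v : star v ⬝ᵥ (Ψ - Aᵀ * Ψ * A).map Complex.ofReal *ᵥ v =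
      (1 - Complex.normSq z : ℝ) * (star v ⬝ᵥ Ψ.map Complex.ofReal *ᵥ v) := by
    rw [Matrix.map_sub _ Complex.ofReal_sub, map_ofReal_transpose_mul_mul, sub_mulVec,
      dotProduct_sub, star_dotProduct_conjTranspose_mul_mul_mulVec hAv,
      Complex.star_def, ← Complex.normSq_eq_conj_mul_self]
    push_cast
    ring
  have hpos := hStein.re_star_dotProduct_map_ofReal_mulVec_pos hv
  rw [hStein_v, Complex.re_ofReal_mul] at hpos
  have hnormSq : Complex.normSq z < 1 := by
    linarith [pos_of_mul_pos_left hpos (hΨ.re_star_dotProduct_map_ofReal_mulVec_nonneg v)]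
  rw [Complex.normSq_eq_norm_sq] at hnormSq
  exact (sq_lt_one_iff₀ (norm_nonneg z)).1 hnormSq

end Matrix

lemma embedUpper_transpose_mul_stackedIP (p L : ℕ) (P : Fin L → Matrix (Fin p) (Fin p) ℝ) :
    (embedUpper p L)ᵀ * stackedIP p L P = 1 := by
  ext ⟨i, a⟩ ⟨j, b⟩
  rw [mul_apply, Finset.sum_eq_single (i.castSucc, a)]
  · simp [embedUpper, stackedIP, one_apply, Prod.ext_iff, Fin.ext_iff]
  · rintro ⟨k, c⟩ - hk
    simp only [embedUpper, transpose_apply, of_apply]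
    rw [if_neg, zero_mul]
    rintro ⟨hki, rfl⟩
    exact hk (by simp [Prod.ext_iff, Fin.ext_iff, hki])
  · simp

lemma embedLower_transpose_mul_stackedIP (p L : ℕ) (P : Fin L → Matrix (Fin p) (Fin p) ℝ) :
    (embedLower p L)ᵀ * stackedIP p L P = blockCompanion p L P := by
  ext ⟨i, a⟩ ⟨j, b⟩
  rw [mul_apply, Finset.sum_eq_single (i.succ, a)]
  · by_cases hlast : (i : ℕ) + 1 = L
    · simp [embedLower, stackedIP, blockCompanion, hlast]
    · have : (i : ℕ) + 1 < L := lt_of_le_of_ne i.isLt hlast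
      simp [embedLower, stackedIP, blockCompanion, hlast, this, eq_comm (a := (i : ℕ) + 1)]
  · rintro ⟨k, c⟩ - hk
    simp only [embedLower, transpose_apply, of_apply]
    rw [if_neg, zero_mul]
    rintro ⟨hki, rfl⟩
    exact hk (by simp [Prod.ext_iff, Fin.ext_iff, hki])
  · simp

lemma stackedIP_transpose_mul_qmi_mul_stackedIP (p L : ℕ)
    (P : Fin L → Matrix (Fin p) (Fin p) ℝ) (Ψ : Matrix (Fin L × Fin p) (Fin L × Fin p) ℝ) :
    (stackedIP p L P)ᵀ * (embedLower p L * Ψ * (embedLower p L)ᵀ -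
        embedUpper p L * Ψ * (embedUpper p L)ᵀ) * stackedIP p L P =
      (blockCompanion p L P)ᵀ * Ψ * blockCompanion p L P - Ψ := by
  have congruence (E : Matrix (Fin (L + 1) × Fin p) (Fin L × Fin p) ℝ) :
      (stackedIP p L P)ᵀ * (E * Ψ * Eᵀ) * stackedIP p L P =
        (Eᵀ * stackedIP p L P)ᵀ * Ψ * (Eᵀ * stackedIP p L P) := by
    simp only [transpose_mul, transpose_transpose, Matrix.mul_assoc]
  rw [Matrix.mul_sub, Matrix.sub_mul, congruence, congruence,
    embedLower_transpose_mul_stackedIP, embedUpper_transpose_mul_stackedIP,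
    transpose_one, Matrix.one_mul, Matrix.mul_one]

/-- QMI condition for stability of an autonomous AR system: if there exists Ψ ⪰ 0
with [I;-P]ᵀ(diag(0_p,Ψ) - diag(Ψ,0_p))[I;-P] ≺ 0, then the companion matrix of
P(ξ) is Schur stable. -/
theorem qmi_condition_for_AR_stability
    (p L : ℕ) (P : Fin L → Matrix (Fin p) (Fin p) ℝ)
    (h : ∃ Ψ : Matrix (Fin L × Fin p) (Fin L × Fin p) ℝ, Ψ.PosSemidef ∧
      (-((stackedIP p L P)ᵀ *
          (embedLower p L * Ψ * (embedLower p L)ᵀ -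
            embedUpper p L * Ψ * (embedUpper p L)ᵀ) *
          stackedIP p L P)).PosDef) :
    ∀ z ∈ spectrum ℂ ((blockCompanion p L P).map Complex.ofReal), ‖z‖ < 1 := by
  obtain ⟨Ψ, hΨ, hQMI⟩ := h
  rw [stackedIP_transpose_mul_qmi_mul_stackedIP, neg_sub] at hQMI
  exact fun z ↦ Matrix.norm_lt_one_of_mem_spectrum_of_posDef_sub hΨ hQMI
end
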